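/- arXiv:math/0410083 — 2 statements merged into one kernel-verified Lean document; each statement's English description precedes it below -/
import Mathlib

section
/- Under the hypotheses of the previous statement (g bounded as (1−x)g(x) ≤ g*, and |g(x) − q| ≤ C x^α near 0 with q > 0, α > 0), the normalized moments E_k(m) = C_k(m)/C_0(m), with C_k(m) = ∫₀¹ x^k (1−x)^m g(x) dx, satisfy m^k · E_k(m) → Γ(k+1) = k! as m → ∞ for every integer k ≥ 1. In particular E_k(m) = O(m^{−k}). -/
/-!
Split `g = q + (g - q)`. The constant part gives the Beta integral
`∫₀¹ x^k (1-x)^m dx = k! / ((m+1)⋯(m+k+1)) ~ k! / m^(k+1)`. For the remainder, near `0` the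
bounds `(1-x)^m ≤ exp (-m x)` and `|g - q| ≤ C x^α` give a Gamma integral of size
`O(m^-(k+1+α))`, while on `[δ, 1]` the bound `(1-x) g ≤ g*` makes the contribution `O((1-δ)^m)`.
Hence
`m^(k+1) ∫₀¹ x^k (1-x)^m g → q k!` for every `k`, and the moment ratio is the quotient of the
cases `k` and `0`.
-/

open Filter Set MeasureTheory Topology Real
open scoped Nat

theorem integral_pow_mul_one_sub_pow (k m : ℕ) :
    ∫ x in (0:ℝ)..1, x ^ k * (1 - x) ^ m
      = (k ! : ℝ) / ∏ j ∈ Finset.range (k + 1), ((m : ℝ) + 1 + j) := by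
  have hu : 0 < ((m : ℂ) + 1).re := by
    simp only [Complex.add_re, Complex.natCast_re, Complex.one_re]
    positivity
  have hbeta := Complex.betaIntegral_eval_nat_add_one_right hu k
  rw [Complex.betaIntegral_symm, Complex.betaIntegral] at hbeta
  simp only [add_sub_cancel_right, Complex.cpow_natCast] at hbeta
  apply Complex.ofReal_injective
  rw [← intervalIntegral.integral_ofReal]
  push_cast
  exact hbeta

theorem tendsto_pow_mul_integral_pow_mul_one_sub_pow (k : ℕ) :
    Tendsto (fun m : ℕ => (m : ℝ) ^ (k + 1) * ∫ x in (0:ℝ)..1, x ^ k * (1 - x) ^ m)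
      atTop (𝓝 (k ! : ℝ)) := by
  have hfactor (j : ℕ) : Tendsto (fun m : ℕ => (m : ℝ) / ((m : ℝ) + 1 + j)) atTop (𝓝 1) :=
    (tendsto_natCast_div_add_atTop (1 + (j : ℝ))).congr fun m => by ring_nf
  have := (tendsto_finsetProd (Finset.range (k + 1)) fun j _ => hfactor j).const_mul (k ! : ℝ)
  rw [Finset.prod_const_one, mul_one] at this
  refine this.congr fun m => ?_
  rw [integral_pow_mul_one_sub_pow, Finset.prod_div_distrib, Finset.prod_const, Finset.card_range]
  ring

theorem integrableOn_rpow_mul_exp_neg_mul {a r : ℝ} (ha : 0 < a) (hr : 0 < r) :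
    IntegrableOn (fun x : ℝ => x ^ (a - 1) * exp (-(r * x))) (Ioi 0) :=
  (integrableOn_rpow_mul_exp_neg_mul_rpow (s := a - 1) (by linarith) one_pos hr).congr_fun
    (fun x _ => by simp only [rpow_one, neg_mul]) measurableSet_Ioi

section

variable {e : ℝ → ℝ} {α C K δ : ℝ}

theorem abs_pow_mul_one_sub_pow_mul_le (hC : 0 ≤ C) (hK : 0 ≤ K) (hδ1 : δ < 1)
    (hnear : ∀ x ∈ Ioc 0 δ, |e x| ≤ C * x ^ α) (hfar : ∀ x ∈ Icc δ 1, (1 - x) * |e x| ≤ K)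
    (k : ℕ) {m : ℕ} (hm : 1 ≤ m) {x : ℝ} (hx : x ∈ Ioc 0 1) :
    |x ^ k * (1 - x) ^ m * e x|
      ≤ C * (x ^ ((k : ℝ) + 1 + α - 1) * exp (-(m * x))) + K / (1 - δ) * (1 - δ) ^ m := by
  obtain ⟨hx0, hx1⟩ := hx
  have hpos : 0 ≤ x ^ k * (1 - x) ^ m := by
    have : 0 ≤ 1 - x := by linarith
    positivity
  have hgamma_nonneg : 0 ≤ C * (x ^ ((k : ℝ) + 1 + α - 1) * exp (-(m * x))) := by positivity
  have htail_nonneg : 0 ≤ K / (1 - δ) * (1 - δ) ^ m := by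
    have : 0 < 1 - δ := by linarith
    positivity
  rw [abs_mul, abs_of_nonneg hpos]
  rcases le_or_gt x δ with hxδ | hδx
  · have hexp : (1 - x) ^ m ≤ exp (-(m * x)) := by
      calc (1 - x) ^ m ≤ exp (-x) ^ m :=
            pow_le_pow_left₀ (by linarith) (by linarith [add_one_le_exp (-x)]) m
        _ = exp (-(m * x)) := by rw [← exp_nat_mul]; ring_nf
    have hrpow : x ^ ((k : ℝ) + 1 + α - 1) = x ^ k * x ^ α := by
      rw [← rpow_natCast, ← rpow_add hx0]; ring_nf
    calc x ^ k * (1 - x) ^ m * |e x| ≤ x ^ k * exp (-(m * x)) * (C * x ^ α) := by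
          gcongr
          exact hnear x ⟨hx0, hxδ⟩
      _ = C * (x ^ ((k : ℝ) + 1 + α - 1) * exp (-(m * x))) := by rw [hrpow]; ring
      _ ≤ _ := le_add_of_nonneg_right htail_nonneg
  · obtain ⟨n, rfl⟩ := Nat.exists_eq_add_of_le' hm
    have h1x : 0 ≤ 1 - x := by linarith
    calc x ^ k * (1 - x) ^ (n + 1) * |e x| = x ^ k * (1 - x) ^ n * ((1 - x) * |e x|) := by
          ring
      _ ≤ 1 * (1 - δ) ^ n * K := by
          gcongr
          · exact pow_le_one₀ hx0.le hx1
          · exact hfar x ⟨hδx.le, hx1⟩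
      _ = K / (1 - δ) * (1 - δ) ^ (n + 1) := by
          field_simp [show 1 - δ ≠ 0 by linarith]
          ring
      _ ≤ _ := le_add_of_nonneg_left hgamma_nonneg

theorem abs_integral_pow_mul_one_sub_pow_mul_le (hα : 0 < α) (hC : 0 ≤ C) (hK : 0 ≤ K)
    (hδ1 : δ < 1) (hnear : ∀ x ∈ Ioc 0 δ, |e x| ≤ C * x ^ α)
    (hfar : ∀ x ∈ Icc δ 1, (1 - x) * |e x| ≤ K) (k : ℕ) {m : ℕ} (hm : 1 ≤ m) :
    |∫ x in (0:ℝ)..1, x ^ k * (1 - x) ^ m * e x|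
      ≤ C * ((1 / (m : ℝ)) ^ ((k : ℝ) + 1 + α) * Gamma ((k : ℝ) + 1 + α))
        + K / (1 - δ) * (1 - δ) ^ m := by
  have ha : (0 : ℝ) < k + 1 + α := by positivity
  have hm0 : (0 : ℝ) < m := by exact_mod_cast hm
  set w : ℝ → ℝ := fun x => x ^ ((k : ℝ) + 1 + α - 1) * exp (-(m * x))
  have hw : IntegrableOn w (Ioi 0) := integrableOn_rpow_mul_exp_neg_mul ha hm0
  have hw_nonneg : ∀ x ∈ Ioi (0 : ℝ), 0 ≤ w x := fun x hx => by
    have : (0 : ℝ) < x := hx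
    positivity
  calc |∫ x in (0:ℝ)..1, x ^ k * (1 - x) ^ m * e x|
      ≤ ∫ x in Ioc (0:ℝ) 1, |x ^ k * (1 - x) ^ m * e x| := by
        rw [← intervalIntegral.integral_of_le zero_le_one]
        exact intervalIntegral.abs_integral_le_integral_abs zero_le_one
    _ ≤ ∫ x in Ioc (0:ℝ) 1, (C * w x + K / (1 - δ) * (1 - δ) ^ m) := by
        refine integral_mono_of_nonneg (ae_of_all _ fun x => abs_nonneg _)
          (((hw.mono_set Ioc_subset_Ioi_self).const_mul C).add (integrableOn_const ?_)) ?_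
        · exact measure_Ioc_lt_top.ne
        · exact (ae_restrict_iff' measurableSet_Ioc).mpr (ae_of_all _ fun x hx =>
            abs_pow_mul_one_sub_pow_mul_le hC hK hδ1 hnear hfar k hm hx)
    _ = C * (∫ x in Ioc (0:ℝ) 1, w x) + K / (1 - δ) * (1 - δ) ^ m := by
        rw [integral_add ((hw.mono_set Ioc_subset_Ioi_self).const_mul C)
          (integrableOn_const measure_Ioc_lt_top.ne), integral_const_mul, setIntegral_const]
        simp
    _ ≤ C * (∫ x in Ioi (0:ℝ), w x) + K / (1 - δ) * (1 - δ) ^ m := by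
        gcongr
        · exact (ae_restrict_iff' measurableSet_Ioi).mpr (ae_of_all _ hw_nonneg)
        · exact Ioc_subset_Ioi_self
    _ = _ := by
        rw [show ∫ x in Ioi (0:ℝ), w x = _ from integral_rpow_mul_exp_neg_mul_Ioi ha hm0]

theorem tendsto_pow_mul_integral_pow_mul_one_sub_pow_mul_nhds_zero (hα : 0 < α) (hδ : 0 < δ)
    (hδ1 : δ < 1) (hnear : ∀ x ∈ Ioc 0 δ, |e x| ≤ C * x ^ α)
    (hfar : ∀ x ∈ Icc δ 1, (1 - x) * |e x| ≤ K) (k : ℕ) :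
    Tendsto (fun m : ℕ => (m : ℝ) ^ (k + 1) * ∫ x in (0:ℝ)..1, x ^ k * (1 - x) ^ m * e x)
      atTop (𝓝 0) := by
  have hC : 0 ≤ C := nonneg_of_mul_nonneg_left
    ((abs_nonneg _).trans (hnear δ ⟨hδ, le_rfl⟩)) (rpow_pos_of_pos hδ α)
  have hK : 0 ≤ K :=
    (mul_nonneg (by linarith) (abs_nonneg _)).trans (hfar δ ⟨le_rfl, hδ1.le⟩)
  have hbound : Tendsto (fun m : ℕ => C * Gamma ((k : ℝ) + 1 + α) * (m : ℝ) ^ (-α)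
      + K / (1 - δ) * ((m : ℝ) ^ (k + 1) * (1 - δ) ^ m)) atTop (𝓝 0) := by
    have hgeom : |1 - δ| < 1 := abs_lt.mpr ⟨by linarith, by linarith⟩
    simpa using (((tendsto_rpow_neg_atTop hα).comp tendsto_natCast_atTop_atTop).const_mul
      (C * Gamma ((k : ℝ) + 1 + α))).add
      ((tendsto_pow_const_mul_const_pow_of_abs_lt_one (k + 1) hgeom).const_mul (K / (1 - δ)))
  refine squeeze_zero_norm' ?_ hbound
  filter_upwards [eventually_ge_atTop 1] with m hm
  have hm0 : (0 : ℝ) < m := by exact_mod_cast hm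
  have hscale :
      (m : ℝ) ^ (k + 1) * (1 / (m : ℝ)) ^ ((k : ℝ) + 1 + α) = (m : ℝ) ^ (-α) := by
    rw [one_div, inv_rpow hm0.le, ← rpow_neg hm0.le, ← rpow_natCast, ← rpow_add hm0]
    push_cast
    ring_nf
  rw [norm_mul, norm_pow, Real.norm_natCast, Real.norm_eq_abs]
  calc (m : ℝ) ^ (k + 1) * |∫ x in (0:ℝ)..1, x ^ k * (1 - x) ^ m * e x|
      ≤ (m : ℝ) ^ (k + 1) *
          (C * ((1 / (m : ℝ)) ^ ((k : ℝ) + 1 + α) * Gamma ((k : ℝ) + 1 + α))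
            + K / (1 - δ) * (1 - δ) ^ m) := by
        gcongr
        exact abs_integral_pow_mul_one_sub_pow_mul_le hα hC hK hδ1 hnear hfar k hm
    _ = _ := by rw [← hscale]; ring

end

theorem intervalIntegrable_pow_mul_one_sub_pow_mul {g : ℝ → ℝ} (hmeas : Measurable g)
    (hnonneg : ∀ x, 0 ≤ g x) {gstar : ℝ} (hbdd : ∀ x ∈ Icc (0:ℝ) 1, (1 - x) * g x ≤ gstar)
    (k : ℕ) {m : ℕ} (hm : 1 ≤ m) :
    IntervalIntegrable (fun x => x ^ k * (1 - x) ^ m * g x) volume 0 1 := by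
  rw [intervalIntegrable_iff_integrableOn_Ioc_of_le zero_le_one]
  refine Measure.integrableOn_of_bounded (M := gstar) measure_Ioc_lt_top.ne
    (by fun_prop) ((ae_restrict_iff' measurableSet_Ioc).mpr (ae_of_all _ fun x hx => ?_))
  obtain ⟨hx0, hx1⟩ := hx
  obtain ⟨n, rfl⟩ := Nat.exists_eq_add_of_le' hm
  have h1x : 0 ≤ 1 - x := by linarith
  rw [Real.norm_of_nonneg (by have := hnonneg x; positivity)]
  calc x ^ k * (1 - x) ^ (n + 1) * g x = x ^ k * (1 - x) ^ n * ((1 - x) * g x) := by ring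
    _ ≤ 1 * 1 * gstar := by
        gcongr
        · exact mul_nonneg h1x (hnonneg x)
        · exact pow_le_one₀ hx0.le hx1
        · exact pow_le_one₀ h1x (by linarith)
        · exact hbdd x ⟨hx0.le, hx1⟩
    _ = gstar := by ring

theorem tendsto_pow_mul_integral_pow_mul_one_sub_pow_mul_of_abs_sub_le {g : ℝ → ℝ}
    (hmeas : Measurable g) (hnonneg : ∀ x, 0 ≤ g x) {gstar : ℝ}
    (hbdd : ∀ x ∈ Icc (0:ℝ) 1, (1 - x) * g x ≤ gstar) {q α ε C : ℝ} (hq : 0 < q) (hα : 0 < α)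
    (hε : 0 < ε) (hnear : ∀ x ∈ Ioc (0:ℝ) ε, |g x - q| ≤ C * x ^ α) (k : ℕ) :
    Tendsto (fun m : ℕ => (m : ℝ) ^ (k + 1) * ∫ x in (0:ℝ)..1, x ^ k * (1 - x) ^ m * g x)
      atTop (𝓝 (q * k !)) := by
  set δ := min ε (1 / 2)
  have hδ : 0 < δ := lt_min hε one_half_pos
  have hδ1 : δ < 1 := (min_le_right _ _).trans_lt one_half_lt_one
  have hfar : ∀ x ∈ Icc δ 1, (1 - x) * |g x - q| ≤ gstar + q := fun x ⟨hδx, hx1⟩ => by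
    have hx0 : 0 ≤ x := hδ.le.trans hδx
    have hg : |g x - q| ≤ g x + q :=
      (abs_sub _ _).trans_eq (by rw [abs_of_nonneg (hnonneg x), abs_of_pos hq])
    nlinarith [hbdd x ⟨hx0, hx1⟩]
  have herr := tendsto_pow_mul_integral_pow_mul_one_sub_pow_mul_nhds_zero hα hδ hδ1
    (fun x ⟨hx0, hxδ⟩ => hnear x ⟨hx0, hxδ.trans (min_le_left _ _)⟩) hfar k
  have hmain := ((tendsto_pow_mul_integral_pow_mul_one_sub_pow k).const_mul q).add herr
  rw [add_zero] at hmain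
  refine hmain.congr' ?_
  filter_upwards [eventually_ge_atTop 1] with m hm
  have hJ := intervalIntegrable_pow_mul_one_sub_pow_mul hmeas hnonneg hbdd k hm
  have hB : IntervalIntegrable (fun x : ℝ => x ^ k * (1 - x) ^ m) volume 0 1 :=
    (by fun_prop : Continuous fun x : ℝ => x ^ k * (1 - x) ^ m).intervalIntegrable 0 1
  simp only [mul_sub]
  rw [intervalIntegral.integral_sub hJ (hB.mul_const q), intervalIntegral.integral_mul_const]
  ring

theorem exists_abs_le_div_pow_of_tendsto_pow_mul {a : ℕ → ℝ} {k : ℕ} {L : ℝ}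
    (h : Tendsto (fun m : ℕ => (m : ℝ) ^ k * a m) atTop (𝓝 L)) :
    ∃ M : ℝ, ∀ m : ℕ, 1 ≤ m → |a m| ≤ M / (m : ℝ) ^ k := by
  obtain ⟨M, hM⟩ := h.abs.bddAbove_range
  refine ⟨M, fun m hm => ?_⟩
  have hpos : (0 : ℝ) < (m : ℝ) ^ k := pow_pos (by exact_mod_cast hm) k
  rw [le_div_iff₀ hpos]
  calc |a m| * (m : ℝ) ^ k = |(m : ℝ) ^ k * a m| := by
        rw [abs_mul, abs_of_pos hpos, mul_comm]
    _ ≤ M := hM (mem_range_self m)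

theorem stmt6_general (g : ℝ → ℝ) (hmeas : Measurable g) (hnonneg : ∀ x, 0 ≤ g x)
    (gstar : ℝ) (hA1 : ∀ x ∈ Icc (0:ℝ) 1, (1 - x) * g x ≤ gstar)
    (q α ε C : ℝ) (hq : 0 < q) (hα : 0 < α) (hε : 0 < ε)
    (hA2 : ∀ x ∈ Ioc (0:ℝ) ε, |g x - q| ≤ C * x ^ α)
    (k : ℕ) :
    Tendsto (fun m : ℕ => (m : ℝ) ^ k *
        ((∫ x in (0:ℝ)..1, x ^ k * (1 - x) ^ m * g x) /
          (∫ x in (0:ℝ)..1, (1 - x) ^ m * g x)))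
      atTop (nhds (Real.Gamma (k + 1))) ∧
    ∃ M : ℝ, ∀ m : ℕ, 1 ≤ m →
      |(∫ x in (0:ℝ)..1, x ^ k * (1 - x) ^ m * g x) /
          (∫ x in (0:ℝ)..1, (1 - x) ^ m * g x)| ≤ M / (m : ℝ) ^ k := by
  have hmoment := tendsto_pow_mul_integral_pow_mul_one_sub_pow_mul_of_abs_sub_le
    hmeas hnonneg hA1 hq hα hε hA2
  have hmass : Tendsto (fun m : ℕ => (m : ℝ) * ∫ x in (0:ℝ)..1, (1 - x) ^ m * g x)
      atTop (𝓝 q) := by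
    simpa using hmoment 0
  have hlim : Tendsto (fun m : ℕ => (m : ℝ) ^ k *
      ((∫ x in (0:ℝ)..1, x ^ k * (1 - x) ^ m * g x) /
        (∫ x in (0:ℝ)..1, (1 - x) ^ m * g x))) atTop (𝓝 (Real.Gamma (k + 1))) := by
    rw [Real.Gamma_nat_eq_factorial, ← mul_div_cancel_left₀ (k ! : ℝ) hq.ne']
    refine ((hmoment k).div hmass hq.ne').congr' ?_
    filter_upwards [eventually_ge_atTop 1] with m hm
    have hm0 : (m : ℝ) ≠ 0 := by positivity
    rw [Pi.div_apply, pow_succ', mul_assoc, mul_div_mul_left _ _ hm0, mul_div_assoc]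
  exact ⟨hlim, exists_abs_le_div_pow_of_tendsto_pow_mul hlim⟩

theorem stmt6 (g : ℝ → ℝ) (hmeas : Measurable g) (hnonneg : ∀ x, 0 ≤ g x)
    (gstar : ℝ) (hA1 : ∀ x ∈ Icc (0:ℝ) 1, (1 - x) * g x ≤ gstar)
    (q α ε C : ℝ) (hq : 0 < q) (hα : 0 < α) (hε : 0 < ε)
    (hA2 : ∀ x ∈ Ioc (0:ℝ) ε, |g x - q| ≤ C * x ^ α)
    (k : ℕ) (hk : 1 ≤ k) :
    Tendsto (fun m : ℕ => (m : ℝ) ^ k *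
        ((∫ x in (0:ℝ)..1, x ^ k * (1 - x) ^ m * g x) /
          (∫ x in (0:ℝ)..1, (1 - x) ^ m * g x)))
      atTop (nhds (Real.Gamma (k + 1))) ∧
    ∃ M : ℝ, ∀ m : ℕ, 1 ≤ m →
      |(∫ x in (0:ℝ)..1, x ^ k * (1 - x) ^ m * g x) /
          (∫ x in (0:ℝ)..1, (1 - x) ^ m * g x)| ≤ M / (m : ℝ) ^ k :=
  stmt6_general g hmeas hnonneg gstar hA1 q α ε C hq hα hε hA2 k
end

section
/- With B_α(y) = Γ(α+1)Γ(y+1)/Γ(y+α+2), for every α > 0, y^α · ( y·B_{α+1}(y) / (B_0(y) + B_α(y)) ) → Γ(α+2) as y → ∞, where y ranges over positive integers. -/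
/-! `B_a(y)` behaves like `Γ(a+1) y^{-(a+1)}` (Euler's limit formula for `Γ`), so after
multiplying numerator and denominator by `y`, the numerator tends to `Γ(α+2)`, while the
denominator `y B₀(y) + y B_α(y)` tends to `1 + 0` because `α > 0`. -/

open Filter

/-- `B_α(y) = Γ(α+1)Γ(y+1)/Γ(y+α+2)`. -/
noncomputable def Bfun (α : ℝ) (y : ℕ) : ℝ :=
  Real.Gamma (α + 1) * Real.Gamma (y + 1) / Real.Gamma (y + α + 2)

theorem Real.Gamma_add_nat_eq_mul_prod {s : ℝ} (hs : 0 < s) (n : ℕ) :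
    Real.Gamma (s + n) = Real.Gamma s * ∏ j ∈ Finset.range n, (s + j) := by
  induction n with
  | zero => simp
  | succ n ih =>
    have h : s + (n : ℝ) ≠ 0 := by positivity
    rw [Finset.prod_range_succ, ← mul_assoc, ← ih, Nat.cast_succ, ← add_assoc,
      Real.Gamma_add_one h, mul_comm]

theorem Real.tendsto_rpow_mul_Gamma_div_Gamma_add {b : ℝ} (hb : 0 < b) :
    Tendsto (fun n : ℕ => (n : ℝ) ^ b * Real.Gamma (n + 1) / Real.Gamma (n + 1 + b))
      atTop (nhds 1) := by
  have hΓ : Real.Gamma b ≠ 0 := (Real.Gamma_pos_of_pos hb).ne'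
  have h_eq : ∀ n : ℕ, (n : ℝ) ^ b * Real.Gamma (n + 1) / Real.Gamma (n + 1 + b)
      = Real.GammaSeq b n / Real.Gamma b := by
    intro n
    have h_arg : (n : ℝ) + 1 + b = b + (n + 1 : ℕ) := by push_cast; ring
    rw [h_arg, Real.Gamma_add_nat_eq_mul_prod hb, Real.Gamma_nat_eq_factorial, Real.GammaSeq,
      mul_comm (Real.Gamma b), ← div_div]
  simp_rw [h_eq]
  simpa [div_self hΓ] using (Real.GammaSeq_tendsto_Gamma b).div_const (Real.Gamma b)

theorem tendsto_rpow_mul_Bfun {a : ℝ} (ha : -1 < a) :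
    Tendsto (fun y : ℕ => (y : ℝ) ^ (a + 1) * Bfun a y) atTop
      (nhds (Real.Gamma (a + 1))) := by
  have h_eq : ∀ y : ℕ, (y : ℝ) ^ (a + 1) * Bfun a y = Real.Gamma (a + 1) *
      ((y : ℝ) ^ (a + 1) * Real.Gamma (y + 1) / Real.Gamma (y + 1 + (a + 1))) := by
    intro y
    rw [Bfun, show (y : ℝ) + a + 2 = y + 1 + (a + 1) by ring]
    ring
  simp_rw [h_eq]
  simpa using (Real.tendsto_rpow_mul_Gamma_div_Gamma_add (by linarith : 0 < a + 1)).const_mul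
    (Real.Gamma (a + 1))

theorem stmt16 (α : ℝ) (hα : 0 < α) :
    Tendsto (fun y : ℕ => (y : ℝ) ^ α *
        ((y : ℝ) * Bfun (α + 1) y / (Bfun 0 y + Bfun α y))) atTop
      (nhds (Real.Gamma (α + 2))) := by
  have h_num := tendsto_rpow_mul_Bfun (by linarith : -1 < α + 1)
  have h_B₀ := tendsto_rpow_mul_Bfun (by norm_num : (-1 : ℝ) < 0)
  have h_Bα := tendsto_rpow_mul_Bfun (by linarith : -1 < α)
  have h_pow : Tendsto (fun y : ℕ => (y : ℝ) ^ (-α)) atTop (nhds 0) :=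
    (tendsto_rpow_neg_atTop hα).comp tendsto_natCast_atTop_atTop
  have h_lim := h_num.div (h_B₀.add (h_pow.mul h_Bα)) (by simp)
  rw [zero_add, Real.Gamma_one, zero_mul, add_zero, div_one, show α + 1 + 1 = α + 2 by ring]
    at h_lim
  refine h_lim.congr' ?_
  filter_upwards [eventually_ne_atTop 0] with y hy_ne
  have hy : (0 : ℝ) < y := by positivity
  have h_rpow_cancel : (y : ℝ) ^ (-α) * (y : ℝ) ^ (α + 1) = y := by
    rw [← Real.rpow_add hy, neg_add_cancel_left, Real.rpow_one]
  have h_rpow_split : (y : ℝ) ^ (α + 2) = (y : ℝ) ^ α * y * y := by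
    rw [show α + 2 = α + 1 + 1 by ring, Real.rpow_add_one hy.ne', Real.rpow_add_one hy.ne']
  simp only [Pi.div_apply, Real.rpow_one, ← mul_assoc, h_rpow_cancel, h_rpow_split, ← mul_add]
  field_simp
end
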